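/- Let W be an algebraic Weyl curvature tensor on a Euclidean vector space V of dimension n ≥ 4 and h an endomorphism of V satisfying W(hF − Fh*) = W(F)h − h*W(F) for all skew-symmetric endomorphisms F. Then h belongs to E_W. -/
import Mathlib


/- Common setup: algebraic Weyl curvature tensors on a Euclidean vector space. -/

open scoped RealInnerProductSpace
open Finset

/-- A curvature-type 4-linear tensor on `V`. -/
abbrev Tensor4 (V : Type*) [NormedAddCommGroup V] [InnerProductSpace ℝ V] : Type _ :=
  V →ₗ[ℝ] V →ₗ[ℝ] V →ₗ[ℝ] V →ₗ[ℝ] ℝ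

variable {V : Type*} [NormedAddCommGroup V] [InnerProductSpace ℝ V] [FiniteDimensional ℝ V]

/-- `W` is an algebraic Weyl curvature tensor: it has the symmetries of a curvature
tensor, satisfies the first Bianchi identity, and is totally trace-free. -/
structure IsWeylTensor (W : Tensor4 V) : Prop where
  antisym₁ : ∀ x y z u, W x y z u = - W y x z u
  antisym₂ : ∀ x y z u, W x y z u = - W x y u z
  pair_symm : ∀ x y z u, W x y z u = W z u x y
  bianchi : ∀ x y z u, W x y z u + W y z x u + W z x y u = 0
  trace_free : ∀ (b : OrthonormalBasis (Fin (Module.finrank ℝ V)) ℝ V) (x y : V),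
      ∑ i, W x (b i) y (b i) = 0

/-- The extension of `W` to endomorphisms, `W(h) = Σᵢ W(eᵢ, ·, h eᵢ, ·)`,
viewed as a bilinear form (identified with an endomorphism via the metric). -/
noncomputable def weylExt {ι : Type*} [Fintype ι]
    (W : Tensor4 V) (b : OrthonormalBasis ι ℝ V) (h : V →ₗ[ℝ] V) (v w : V) : ℝ :=
  ∑ i, W (b i) v (h (b i)) w

/-- The space `E_W`: endomorphisms `h` with `W(x,y,hz,·) + W(y,z,hx,·) + W(z,x,hy,·) = 0`. -/
def memE (W : Tensor4 V) (h : V →ₗ[ℝ] V) : Prop :=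
  ∀ x y z u, W x y (h z) u + W y z (h x) u + W z x (h y) u = 0

/-- The Lie algebra `g_W` of the symmetry group of `W`. -/
def memG (W : Tensor4 V) (h : V →ₗ[ℝ] V) : Prop :=
  ∀ x y z u, W (h x) y z u + W x (h y) z u + W x y (h z) u + W x y z (h u) = 0

/-- Skew-symmetric endomorphisms (identified with 2-forms). -/
def IsSkew (F : V →ₗ[ℝ] V) : Prop := ∀ v w, ⟪F v, w⟫ = - ⟪v, F w⟫

/-- Symmetric endomorphisms. -/
def IsSym (F : V →ₗ[ℝ] V) : Prop := ∀ v w, ⟪F v, w⟫ = ⟪v, F w⟫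

/-- The bilinear form `g(F·,·)` associated to an endomorphism `F`. -/
noncomputable def form (F : V →ₗ[ℝ] V) (v w : V) : ℝ := ⟪F v, w⟫


/-- The rank-two skew endomorphism `v ↦ ⟪x,v⟫ y − ⟪y,v⟫ x`. -/
noncomputable def rk2 (x y : V) : V →ₗ[ℝ] V where
  toFun v := ⟪x, v⟫ • y - ⟪y, v⟫ • x
  map_add' a c := by
    simp only [inner_add_right, add_smul]
    abel
  map_smul' c a := by
    simp only [real_inner_smul_right, RingHom.id_apply, smul_sub, mul_smul]

lemma rk2_apply (x y v : V) : rk2 x y v = ⟪x, v⟫ • y - ⟪y, v⟫ • x := rfl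

lemma rk2_skew (x y : V) : IsSkew (rk2 x y) := by
  intro v w
  simp only [rk2_apply, inner_sub_left, inner_sub_right, real_inner_smul_left,
    real_inner_smul_right, real_inner_comm v x, real_inner_comm v y]
  ring

lemma contract (W : Tensor4 V) {ι : Type*} [Fintype ι] (b : OrthonormalBasis ι ℝ V)
    (x v y w : V) : ∑ i, ⟪x, b i⟫ * W (b i) v y w = W x v y w := by
  conv_rhs => rw [← b.sum_repr' x]
  rw [map_sum]
  simp only [LinearMap.coe_sum, Finset.sum_apply, map_smul, LinearMap.smul_apply,
    smul_eq_mul]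
  exact Finset.sum_congr rfl fun i _ => by rw [real_inner_comm]

lemma weylExt_rk2 (W : Tensor4 V) {ι : Type*} [Fintype ι] (b : OrthonormalBasis ι ℝ V)
    (x y v w : V) : weylExt W b (rk2 x y) v w = W x v y w - W y v x w := by
  unfold weylExt
  have e : ∀ i, W (b i) v (rk2 x y (b i)) w
      = ⟪x, b i⟫ * W (b i) v y w - ⟪y, b i⟫ * W (b i) v x w := by
    intro i
    simp [rk2_apply, map_sub, map_smul, LinearMap.sub_apply, LinearMap.smul_apply,
      smul_eq_mul]
  rw [Finset.sum_congr rfl fun i _ => e i, Finset.sum_sub_distrib, contract, contract]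

lemma weylExt_rk2_comp (W : Tensor4 V) {ι : Type*} [Fintype ι] (b : OrthonormalBasis ι ℝ V)
    (h : V →ₗ[ℝ] V) (x y v w : V) :
    weylExt W b (h ∘ₗ rk2 x y - rk2 x y ∘ₗ LinearMap.adjoint h) v w
      = W x v (h y) w - W y v (h x) w - W (h x) v y w + W (h y) v x w := by
  unfold weylExt
  have e : ∀ i, W (b i) v ((h ∘ₗ rk2 x y - rk2 x y ∘ₗ LinearMap.adjoint h) (b i)) w
      = ⟪x, b i⟫ * W (b i) v (h y) w - ⟪y, b i⟫ * W (b i) v (h x) w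
        - (⟪h x, b i⟫ * W (b i) v y w - ⟪h y, b i⟫ * W (b i) v x w) := by
    intro i
    have : (h ∘ₗ rk2 x y - rk2 x y ∘ₗ LinearMap.adjoint h) (b i)
        = ⟪x, b i⟫ • h y - ⟪y, b i⟫ • h x - (⟪h x, b i⟫ • y - ⟪h y, b i⟫ • x) := by
      simp [rk2_apply, LinearMap.sub_apply, LinearMap.comp_apply, map_sub, map_smul,
        LinearMap.adjoint_inner_right]
    rw [this]
    simp [map_sub, map_smul, LinearMap.sub_apply, LinearMap.smul_apply, smul_eq_mul]
  rw [Finset.sum_congr rfl fun i _ => e i]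
  rw [Finset.sum_sub_distrib, Finset.sum_sub_distrib, Finset.sum_sub_distrib,
    contract, contract, contract, contract]
  ring

/-- if `W(hF − Fh*) = W(F)h − h*W(F)` for all skew-symmetric `F`,
then `h ∈ E_W`. -/
theorem stmt5 (hn : 4 ≤ Module.finrank ℝ V) (W : Tensor4 V) (hW : IsWeylTensor W)
    (b : OrthonormalBasis (Fin (Module.finrank ℝ V)) ℝ V)
    (h : V →ₗ[ℝ] V)
    (hyp : ∀ F : V →ₗ[ℝ] V, IsSkew F → ∀ v w,
      weylExt W b (h ∘ₗ F - F ∘ₗ LinearMap.adjoint h) v w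
        = weylExt W b F (h v) w - weylExt W b F v (h w)) :
    memE W h := by
  have hyp'' : ∀ x y v w : V,
      W x v (h y) w - W y v (h x) w - W (h x) v y w + W (h y) v x w
        = (W x (h v) y w - W y (h v) x w) - (W x v y (h w) - W y v x (h w)) := by
    intro x y v w
    have H := hyp (rk2 x y) (rk2_skew x y) v w
    rwa [weylExt_rk2_comp, weylExt_rk2, weylExt_rk2] at H
  intro x y z u
  linear_combination (1/4 : ℝ) * hW.antisym₁ x y (h z) u
    + (3/4 : ℝ) * hW.antisym₁ x z (h y) u
    + (1/4 : ℝ) * hW.antisym₁ x (h y) z u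
    + (-1/4 : ℝ) * hW.antisym₁ x (h z) y u
    + (1/4 : ℝ) * hW.antisym₁ y z (h x) u
    + (-1/4 : ℝ) * hW.antisym₁ y (h x) z u
    + (-1/4 : ℝ) * hW.antisym₂ x u y (h z)
    + (1/4 : ℝ) * hW.antisym₂ x u z (h y)
    + (-1/4 : ℝ) * hW.antisym₂ y u z (h x)
    + (-1/4 : ℝ) * hW.bianchi x y z (h u)
    + (1/2 : ℝ) * hW.bianchi x y (h z) u
    + (1/4 : ℝ) * hW.bianchi x z y (h u)
    + (-1/2 : ℝ) * hW.bianchi x z (h y) u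
    + (1/2 : ℝ) * hW.bianchi y z (h x) u
    + (-1/4 : ℝ) * hyp'' x y z u
    + (1/4 : ℝ) * hyp'' x z y u
    + (-1/4 : ℝ) * hyp'' y z x u
    + (1/4 : ℝ) * hW.pair_symm x u y (h z)
    + (-1/4 : ℝ) * hW.pair_symm x u z (h y)
    + (-1/4 : ℝ) * hW.pair_symm x u (h y) z
    + (1/4 : ℝ) * hW.pair_symm x u (h z) y
    + (1/4 : ℝ) * hW.pair_symm y u z (h x)
    + (1/4 : ℝ) * hW.pair_symm y u (h x) z
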